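/- arXiv:2105.13245 — 4 statements merged into one kernel-verified Lean document; each statement's English description precedes it below -/
import Mathlib

section
/- Let γ denote the standard Gaussian probability measure on ℝ (mean 0, variance 1), let n ≥ 1, and let a, b : Fin n → ℝ. Suppose there is an index i* with a i* = max_{i} a i and an index j with b j ≠ b i*. Then ∫_ℝ max_{i} (a i + b i · z) dγ(z) > max_{i} a i. -/
/-!
Keeping only a maximising line `i` and a line `j` of different slope, the maximum of the
affine functions is at least `a i + b i z + max 0 ((a j - a i) + (b j - b i) z)`. The first two
terms integrate to `a i` against a centred measure, and the positive part of a non-constant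
affine function is positive on a nonempty open half-line, which the Gaussian measure charges.
-/

open MeasureTheory ProbabilityTheory

/-- The standard Gaussian probability measure on ℝ (mean 0, variance 1). -/
noncomputable def stdGaussian : Measure ℝ := gaussianReal 0 1

theorem MeasureTheory.Integrable.finset_sup' {ι α : Type*} [MeasurableSpace α] {μ : Measure α}
    (s : Finset ι) (hs : s.Nonempty) {f : ι → α → ℝ} (hf : ∀ i ∈ s, Integrable (f i) μ) :
    Integrable (fun x => s.sup' hs (fun i => f i x)) μ := by
  simp_rw [← Finset.sup'_apply]
  exact Finset.sup'_induction (p := (Integrable · μ)) hs f (fun _ h₁ _ h₂ => h₁.sup h₂) hf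

theorem ProbabilityTheory.isOpenPosMeasure_gaussianReal (m : ℝ) {v : NNReal} (hv : v ≠ 0) :
    (gaussianReal m v).IsOpenPosMeasure :=
  (gaussianReal_absolutelyContinuous' m hv).isOpenPosMeasure

section AffineMaximum

variable {μ : Measure ℝ}

theorem integral_max_zero_affine_pos [IsFiniteMeasure μ] [μ.IsOpenPosMeasure]
    (hμ : Integrable id μ) (p : ℝ) {q : ℝ} (hq : q ≠ 0) : 0 < ∫ z, max 0 (p + q * z) ∂μ := by
  have hint : Integrable (fun z => max 0 (p + q * z)) μ :=
    (integrable_const 0).sup ((integrable_const p).add (hμ.const_mul q))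
  rw [integral_pos_iff_support_of_nonneg (f := fun z => max 0 (p + q * z))
    (fun z => le_max_left _ _) hint]
  have hne : {z : ℝ | 0 < p + q * z}.Nonempty :=
    ⟨(1 - p) / q, show 0 < p + q * ((1 - p) / q) by field_simp; linarith⟩
  calc 0 < μ {z | 0 < p + q * z} := (isOpen_lt continuous_const (by fun_prop)).measure_pos μ hne
    _ ≤ _ := measure_mono fun z hz => (lt_max_of_lt_right hz).ne'

theorem lt_integral_finset_sup'_affine [IsProbabilityMeasure μ] [μ.IsOpenPosMeasure]
    (hμ : Integrable id μ) {ι : Type*} (s : Finset ι) (hs : s.Nonempty) (a b : ι → ℝ)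
    {i j : ι} (hi : i ∈ s) (hj : j ∈ s) (hij : b j ≠ b i) :
    a i + b i * ∫ z, z ∂μ < ∫ z, s.sup' hs (fun k => a k + b k * z) ∂μ := by
  have hid : Integrable (fun z : ℝ => z) μ := hμ
  have hline (p q : ℝ) : Integrable (fun z => p + q * z) μ :=
    (integrable_const p).add (hid.const_mul q)
  set h : ℝ → ℝ := fun z => max 0 ((a j - a i) + (b j - b i) * z)
  have hh : Integrable h μ := (integrable_const 0).sup (hline _ _)
  have hle : ∀ z, a i + b i * z + h z ≤ s.sup' hs (fun k => a k + b k * z) := fun z =>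
    calc a i + b i * z + h z = max (a i + b i * z) (a j + b j * z) := by
          rw [← max_add_add_left]; congr 1 <;> ring
      _ ≤ _ := max_le (Finset.le_sup' (fun k => a k + b k * z) hi)
          (Finset.le_sup' (fun k => a k + b k * z) hj)
  calc a i + b i * ∫ z, z ∂μ < a i + b i * ∫ z, z ∂μ + ∫ z, h z ∂μ := by
        linarith [integral_max_zero_affine_pos hμ (a j - a i) (sub_ne_zero.mpr hij)]
    _ = ∫ z, (a i + b i * z + h z) ∂μ := by
        rw [integral_add (hline _ _) hh, integral_add (integrable_const _) (hid.const_mul _),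
          integral_const, integral_const_mul]
        simp
    _ ≤ _ := integral_mono ((hline _ _).add hh) (.finset_sup' s hs fun k _ => hline _ _) hle

end AffineMaximum

/-- if some maximizing intercept index `i*` has a slope differing from some
other slope `b j`, then the Gaussian expectation of the maximum of the affine functions
strictly exceeds the maximum intercept. -/
theorem stmt_2 (n : ℕ) (hn : 1 ≤ n) (a b : Fin n → ℝ) (istar : Fin n)
    (hstar : a istar = Finset.univ.sup' ⟨⟨0, hn⟩, Finset.mem_univ _⟩ a)
    (j : Fin n) (hj : b j ≠ b istar) :
    (∫ z, Finset.univ.sup' ⟨⟨0, hn⟩, Finset.mem_univ _⟩ (fun i => a i + b i * z)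
        ∂stdGaussian) >
      Finset.univ.sup' ⟨⟨0, hn⟩, Finset.mem_univ _⟩ a := by
  unfold _root_.stdGaussian
  have := isOpenPosMeasure_gaussianReal 0 one_ne_zero
  have hid : Integrable id (gaussianReal 0 1) :=
    (memLp_id_gaussianReal 1).integrable le_rfl
  have key := lt_integral_finset_sup'_affine hid Finset.univ ⟨⟨0, hn⟩, Finset.mem_univ _⟩ a b
    (Finset.mem_univ istar) (Finset.mem_univ j) hj
  rwa [integral_id_gaussianReal, mul_zero, add_zero, hstar] at key
end

section
/- Let γ denote the standard Gaussian probability measure on ℝ (mean 0, variance 1), let n ≥ 1, and let a, b : Fin n → ℝ. Then ∫_ℝ max_{i} (a i + b i · z) dγ(z) = max_{i} a i if and only if b is constant, i.e. b i = b j for all i, j. -/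
open MeasureTheory ProbabilityTheory

/-!
Write `ℓᵢ z = aᵢ + bᵢ z` and `F = maxᵢ ℓᵢ`, and let `m` be the mean of a probability measure `μ`
on `ℝ`. Then `∫ ℓᵢ dμ = ℓᵢ m`, so choosing `k` with `ℓₖ m = maxᵢ ℓᵢ m`, equality
`∫ F dμ = maxᵢ ℓᵢ m` says that the continuous function `F - ℓₖ ≥ 0` has integral zero. If `μ`
charges every nonempty open set, this forces `F = ℓₖ` everywhere, i.e. `ℓᵢ ≤ ℓₖ` on all of `ℝ`,
which for affine functions means `bᵢ = bₖ`. Conversely, with a common slope `F` is itself affine.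
The Gaussian is such a measure with mean `0`.
-/

theorem MeasureTheory.Integrable.finset_sup'_apply {α ι β : Type*} [MeasurableSpace α]
    {μ : Measure α} [NormedAddCommGroup β] [Lattice β] [HasSolidNorm β] [IsOrderedAddMonoid β]
    {s : Finset ι} (hs : s.Nonempty) {f : ι → α → β} (hf : ∀ i ∈ s, Integrable (f i) μ) :
    Integrable (fun x => s.sup' hs fun i => f i x) μ := by
  convert Finset.sup'_induction hs f (p := (Integrable · μ)) (fun _ h₁ _ h₂ => h₁.sup h₂) hf
    using 1
  exact funext fun x => (Finset.sup'_apply hs f x).symm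

theorem eq_zero_of_forall_add_mul_nonpos {c d : ℝ} (h : ∀ z, c + d * z ≤ 0) : d = 0 := by
  by_contra hd
  have h₁ := h ((1 - c) / d)
  rw [mul_div_cancel₀ _ hd] at h₁
  linarith

section AffineMax

variable {μ : Measure ℝ} [IsProbabilityMeasure μ] {ι : Type*}

theorem integral_const_add_mul_id (hμ : Integrable (fun z => z) μ) (c d : ℝ) :
    ∫ z, c + d * z ∂μ = c + d * ∫ z, z ∂μ := by
  rw [integral_add (integrable_const c) (hμ.const_mul d), integral_const, integral_const_mul]
  simp

theorem integral_finset_sup'_affine_eq_iff [μ.IsOpenPosMeasure]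
    (hμ : Integrable (fun z => z) μ) {s : Finset ι} (hs : s.Nonempty) (a b : ι → ℝ) :
    ∫ z, s.sup' hs (fun i => a i + b i * z) ∂μ = s.sup' hs (fun i => a i + b i * ∫ z, z ∂μ) ↔
      ∀ i ∈ s, ∀ j ∈ s, b i = b j := by
  set m := ∫ z, z ∂μ
  set F : ℝ → ℝ := fun z => s.sup' hs fun i => a i + b i * z
  have hF : Integrable F μ :=
    Integrable.finset_sup'_apply hs fun i _ => (integrable_const _).add (hμ.const_mul _)
  constructor
  · intro h
    obtain ⟨k, hk, hFm⟩ := Finset.exists_mem_eq_sup' hs fun i => a i + b i * m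
    have hℓ : Integrable (fun z => a k + b k * z) μ := (integrable_const _).add (hμ.const_mul _)
    have hgap : (fun z => F z - (a k + b k * z)) =ᵐ[μ] 0 := by
      refine (integral_eq_zero_iff_of_nonneg (fun z => ?_) (hF.sub hℓ)).1 ?_
      · exact sub_nonneg.2 (Finset.le_sup' (fun i => a i + b i * z) hk)
      · show ∫ z, F z - (a k + b k * z) ∂μ = 0
        rw [integral_sub hF hℓ, integral_const_add_mul_id hμ, h, hFm, sub_self]
    have hFk : ∀ z, F z = a k + b k * z := by
      have hcont : Continuous fun z => F z - (a k + b k * z) := by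
        refine .sub (Continuous.finset_sup'_apply hs fun i _ => ?_) ?_ <;> fun_prop
      intro z
      exact sub_eq_zero.1 (congrFun ((hcont.ae_eq_iff_eq μ continuous_const).1 hgap) z)
    have hslope : ∀ i ∈ s, b i = b k := fun i hi => sub_eq_zero.1 <|
      eq_zero_of_forall_add_mul_nonpos (c := a i - a k) fun z => by
        have hle : a i + b i * z ≤ F z := Finset.le_sup' (fun i => a i + b i * z) hi
        linarith [hFk z]
    intro i hi j hj
    rw [hslope i hi, hslope j hj]
  · intro hb
    obtain ⟨j, hj⟩ := id hs
    have hF_affine : ∀ z, F z = s.sup' hs a + b j * z := fun z => by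
      rw [Finset.sup'_add]
      exact Finset.sup'_congr _ rfl fun i hi => by rw [hb i hi j hj]
    calc ∫ z, F z ∂μ = ∫ z, s.sup' hs a + b j * z ∂μ := by simp_rw [hF_affine]
      _ = s.sup' hs a + b j * m := integral_const_add_mul_id hμ _ _
      _ = F m := (hF_affine m).symm

end AffineMax

/-- the Gaussian expectation of the maximum of finitely many affine functions
equals the maximum of the intercepts if and only if all slopes are equal. -/
theorem stmt_3 (n : ℕ) (hn : 1 ≤ n) (a b : Fin n → ℝ) :
    (∫ z, Finset.univ.sup' ⟨⟨0, hn⟩, Finset.mem_univ _⟩ (fun i => a i + b i * z)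
        ∂stdGaussian) =
      Finset.univ.sup' ⟨⟨0, hn⟩, Finset.mem_univ _⟩ a ↔ ∀ i j : Fin n, b i = b j := by
  have := isOpenPosMeasure_gaussianReal 0 one_ne_zero
  have h := integral_finset_sup'_affine_eq_iff (μ := gaussianReal 0 1)
    IsGaussian.integrable_id ⟨⟨0, hn⟩, Finset.mem_univ _⟩ a b
  simpa [_root_.stdGaussian, integral_id_gaussianReal] using h
end

section
/- Let γ denote the standard Gaussian probability measure on ℝ, φ the standard normal density and Φ the standard normal CDF. Let a₁, a₂, b₁, b₂ be real numbers with b₁ < b₂, and set z* = (a₁ − a₂)/(b₂ − b₁). Then ∫_ℝ max(a₁ + b₁·z, a₂ + b₂·z) dγ(z) = a₁·Φ(z*) + a₂·(1 − Φ(z*)) + (b₂ − b₁)·φ(z*). -/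
open MeasureTheory ProbabilityTheory

/-- The standard normal density φ(z) = (2π)^{-1/2} exp(−z²/2). -/
noncomputable def stdNormalPDF (z : ℝ) : ℝ :=
  (Real.sqrt (2 * Real.pi))⁻¹ * Real.exp (-z ^ 2 / 2)

/-- The standard normal CDF Φ(z) = ∫_{−∞}^{z} φ(t) dt. -/
noncomputable def stdNormalCDF (z : ℝ) : ℝ := ∫ t in Set.Iic z, stdNormalPDF t

/-!
Integrating against γ means integrating against the density φ. The maximum equals the first
line on `Iic z*` and the second on `Ioi z*`, so the integral splits into two truncated first
moments of affine functions. Constant terms give `Φ(z*)` and `1 - Φ(z*)`; the linear terms are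
computed with the antiderivative `-φ` of `z φ(z)`, giving `-φ(z*)` and `φ(z*)`.
-/

open Set Filter Topology

lemma stdNormalPDF_eq_gaussianPDFReal : stdNormalPDF = gaussianPDFReal 0 1 := by
  funext z
  simp [stdNormalPDF, gaussianPDFReal]

lemma integrable_stdNormalPDF : Integrable stdNormalPDF :=
  stdNormalPDF_eq_gaussianPDFReal ▸ integrable_gaussianPDFReal 0 1

lemma integral_stdNormalPDF : ∫ z, stdNormalPDF z = 1 :=
  stdNormalPDF_eq_gaussianPDFReal ▸ integral_gaussianPDFReal_eq_one 0 one_ne_zero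

lemma integral_stdGaussian_eq (f : ℝ → ℝ) :
    ∫ z, f z ∂stdGaussian = ∫ z, stdNormalPDF z * f z := by
  rw [_root_.stdGaussian, integral_gaussianReal_eq_integral_smul one_ne_zero,
    stdNormalPDF_eq_gaussianPDFReal]
  rfl

lemma integral_Ioi_stdNormalPDF (s : ℝ) :
    ∫ z in Ioi s, stdNormalPDF z = 1 - stdNormalCDF s := by
  rw [← integral_stdNormalPDF, stdNormalCDF, ← intervalIntegral.integral_Iic_add_Ioi
    integrable_stdNormalPDF.integrableOn integrable_stdNormalPDF.integrableOn]
  ring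

lemma integrable_mul_stdNormalPDF : Integrable fun z => z * stdNormalPDF z := by
  refine ((integrable_mul_exp_neg_mul_sq (b := 1 / 2) (by norm_num)).const_mul
    (Real.sqrt (2 * Real.pi))⁻¹).congr (ae_of_all _ fun z => ?_)
  simp only [stdNormalPDF]
  ring_nf

lemma hasDerivAt_neg_stdNormalPDF (z : ℝ) :
    HasDerivAt (fun z => -stdNormalPDF z) (z * stdNormalPDF z) z := by
  have hexp : HasDerivAt (fun z : ℝ => Real.exp (-z ^ 2 / 2)) (Real.exp (-z ^ 2 / 2) * -z) z :=
    (((hasDerivAt_pow 2 z).neg.div_const 2).congr_deriv (by ring)).exp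
  exact (hexp.const_mul (Real.sqrt (2 * Real.pi))⁻¹).neg.congr_deriv (by rw [stdNormalPDF]; ring)

lemma tendsto_stdNormalPDF_cocompact : Tendsto stdNormalPDF (cocompact ℝ) (𝓝 0) := by
  have h := (tendsto_rpow_abs_mul_exp_neg_mul_sq_cocompact (a := 1 / 2) (by norm_num) 0).const_mul
    (Real.sqrt (2 * Real.pi))⁻¹
  rw [mul_zero] at h
  refine h.congr fun z => ?_
  simp only [stdNormalPDF, Real.rpow_zero, one_mul]
  ring_nf

lemma integral_Iic_mul_stdNormalPDF (s : ℝ) :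
    ∫ z in Iic s, z * stdNormalPDF z = -stdNormalPDF s := by
  have h := (tendsto_stdNormalPDF_cocompact.mono_left atBot_le_cocompact).neg
  rw [neg_zero] at h
  rw [integral_Iic_of_hasDerivAt_of_tendsto' (fun z _ => hasDerivAt_neg_stdNormalPDF z)
    integrable_mul_stdNormalPDF.integrableOn h, sub_zero]

lemma integral_Ioi_mul_stdNormalPDF (s : ℝ) :
    ∫ z in Ioi s, z * stdNormalPDF z = stdNormalPDF s := by
  have h := (tendsto_stdNormalPDF_cocompact.mono_left atTop_le_cocompact).neg
  rw [neg_zero] at h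
  rw [integral_Ioi_of_hasDerivAt_of_tendsto' (fun z _ => hasDerivAt_neg_stdNormalPDF z)
    integrable_mul_stdNormalPDF.integrableOn h, zero_sub, neg_neg]

lemma integrable_stdNormalPDF_mul_affine (a b : ℝ) :
    Integrable fun z => stdNormalPDF z * (a + b * z) := by
  refine ((integrable_stdNormalPDF.const_mul a).add
    (integrable_mul_stdNormalPDF.const_mul b)).congr (ae_of_all _ fun z => ?_)
  simp only [Pi.add_apply]
  ring

lemma setIntegral_stdNormalPDF_mul_affine (a b : ℝ) {S : Set ℝ} (hS : MeasurableSet S) :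
    ∫ z in S, stdNormalPDF z * (a + b * z) =
      a * (∫ z in S, stdNormalPDF z) + b * ∫ z in S, z * stdNormalPDF z := by
  rw [← integral_const_mul, ← integral_const_mul, ← integral_add
    (integrable_stdNormalPDF.integrableOn.const_mul a)
    (integrable_mul_stdNormalPDF.integrableOn.const_mul b)]
  refine setIntegral_congr_fun hS fun z _ => ?_
  ring

/-- closed-form Knowledge Gradient for two affine alternatives:
for b₁ < b₂ and z* = (a₁ − a₂)/(b₂ − b₁),
∫ max(a₁ + b₁z, a₂ + b₂z) dγ(z) = a₁Φ(z*) + a₂(1 − Φ(z*)) + (b₂ − b₁)φ(z*). -/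
theorem stmt_5 (a₁ a₂ b₁ b₂ : ℝ) (hb : b₁ < b₂) :
    (∫ z, max (a₁ + b₁ * z) (a₂ + b₂ * z) ∂stdGaussian) =
      a₁ * stdNormalCDF ((a₁ - a₂) / (b₂ - b₁)) +
        a₂ * (1 - stdNormalCDF ((a₁ - a₂) / (b₂ - b₁))) +
        (b₂ - b₁) * stdNormalPDF ((a₁ - a₂) / (b₂ - b₁)) := by
  set s := (a₁ - a₂) / (b₂ - b₁)
  have hc : 0 < b₂ - b₁ := sub_pos.2 hb
  have hleft : EqOn (fun z => stdNormalPDF z * max (a₁ + b₁ * z) (a₂ + b₂ * z))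
      (fun z => stdNormalPDF z * (a₁ + b₁ * z)) (Iic s) := fun z hz => by
    have : z * (b₂ - b₁) ≤ a₁ - a₂ := (le_div_iff₀ hc).1 hz
    simp only [max_eq_left (by linarith : a₂ + b₂ * z ≤ a₁ + b₁ * z)]
  have hright : EqOn (fun z => stdNormalPDF z * max (a₁ + b₁ * z) (a₂ + b₂ * z))
      (fun z => stdNormalPDF z * (a₂ + b₂ * z)) (Ioi s) := fun z hz => by
    have : a₁ - a₂ ≤ z * (b₂ - b₁) := (div_le_iff₀ hc).1 (le_of_lt hz)
    simp only [max_eq_right (by linarith : a₁ + b₁ * z ≤ a₂ + b₂ * z)]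
  rw [integral_stdGaussian_eq, ← intervalIntegral.integral_Iic_add_Ioi
      ((integrable_stdNormalPDF_mul_affine a₁ b₁).integrableOn.congr_fun hleft.symm
        measurableSet_Iic)
      ((integrable_stdNormalPDF_mul_affine a₂ b₂).integrableOn.congr_fun hright.symm
        measurableSet_Ioi),
    setIntegral_congr_fun measurableSet_Iic hleft, setIntegral_congr_fun measurableSet_Ioi hright,
    setIntegral_stdNormalPDF_mul_affine _ _ measurableSet_Iic,
    setIntegral_stdNormalPDF_mul_affine _ _ measurableSet_Ioi, integral_Iic_mul_stdNormalPDF,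
    integral_Ioi_mul_stdNormalPDF, integral_Ioi_stdNormalPDF, ← stdNormalCDF]
  ring
end

section
/- Let m ≥ 2 and a, b : Fin m → ℝ with b strictly increasing (b i < b j whenever i < j). For 0 ≤ i ≤ m−2 define the breakpoints z_i = (a_i − a_{i+1})/(b_{i+1} − b_i), and suppose the breakpoints are strictly increasing (z_i < z_{i+1} for 0 ≤ i ≤ m−3). Then for every index j and every real z satisfying z_{j−1} ≤ z (omitted when j = 0) and z ≤ z_j (omitted when j = m−1), one has max_{i} (a_i + b_i·z) = a_j + b_j·z. -/
/-- correctness of the upper-envelope construction. If the slopes `b` are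
strictly increasing and the consecutive breakpoints `zb i = (a i − a (i+1))/(b (i+1) − b i)`
are strictly increasing, then line `j` attains the pointwise maximum on the interval
between its two adjacent breakpoints (the left condition being omitted for `j = 0` and the
right one for `j = m − 1`). -/
theorem stmt_6 (m : ℕ) (hm : 2 ≤ m) (a b : Fin m → ℝ) (hb : StrictMono b)
    (zb : ℕ → ℝ)
    (hzb : ∀ i : ℕ, (h : i + 1 < m) →
      zb i = (a ⟨i, by omega⟩ - a ⟨i + 1, h⟩) / (b ⟨i + 1, h⟩ - b ⟨i, by omega⟩))
    (hzmono : ∀ i : ℕ, i + 2 < m → zb i < zb (i + 1)) :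
    ∀ (j : Fin m) (z : ℝ), ((j : ℕ) = 0 ∨ zb ((j : ℕ) - 1) ≤ z) →
      ((j : ℕ) = m - 1 ∨ z ≤ zb (j : ℕ)) →
      Finset.univ.sup' ⟨⟨0, by omega⟩, Finset.mem_univ _⟩ (fun i => a i + b i * z) =
        a j + b j * z := by
  intro j z hL hR
  set f : Fin m → ℝ := fun i => a i + b i * z with hf
  have zmono : ∀ p q : ℕ, q + 1 < m → p ≤ q → zb p ≤ zb q := by
    intro p q hq hpq
    induction q with
    | zero =>
      have : p = 0 := by omega
      subst this; exact le_refl _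
    | succ n ih =>
      rcases Nat.lt_or_ge p (n + 1) with h | h
      · exact le_trans (ih (by omega) (by omega)) (le_of_lt (hzmono n (by omega)))
      · have : p = n + 1 := by omega
        subst this; exact le_refl _
  have keyup : ∀ i : ℕ, (h : i + 1 < m) → zb i ≤ z →
      f ⟨i, by omega⟩ ≤ f ⟨i + 1, h⟩ := by
    intro i h hz
    have hbpos : (0 : ℝ) < b ⟨i + 1, h⟩ - b ⟨i, by omega⟩ := by
      have := hb (show (⟨i, by omega⟩ : Fin m) < ⟨i + 1, h⟩ by
        simp [Fin.lt_def])
      linarith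
    rw [hzb i h, div_le_iff₀ hbpos] at hz
    simp only [hf]
    nlinarith
  have keydown : ∀ i : ℕ, (h : i + 1 < m) → z ≤ zb i →
      f ⟨i + 1, h⟩ ≤ f ⟨i, by omega⟩ := by
    intro i h hz
    have hbpos : (0 : ℝ) < b ⟨i + 1, h⟩ - b ⟨i, by omega⟩ := by
      have := hb (show (⟨i, by omega⟩ : Fin m) < ⟨i + 1, h⟩ by
        simp [Fin.lt_def])
      linarith
    rw [hzb i h, le_div_iff₀ hbpos] at hz
    simp only [hf]
    nlinarith
  have hjm : (j : ℕ) < m := j.isLt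
  have up : ∀ k : ℕ, k ≤ (j : ℕ) → f ⟨(j : ℕ) - k, by omega⟩ ≤ f j := by
    intro k hk
    induction k with
    | zero =>
      exact le_of_eq (congrArg f (Fin.ext (by simp)))
    | succ n ih =>
      have hj0 : (j : ℕ) ≠ 0 := by omega
      have hzle : zb ((j : ℕ) - 1) ≤ z := hL.resolve_left hj0
      have hi1 : (j : ℕ) - (n + 1) + 1 = (j : ℕ) - n := by omega
      have hlt : (j : ℕ) - (n + 1) + 1 < m := by omega
      have step := keyup ((j : ℕ) - (n + 1)) hlt
        (le_trans (zmono _ ((j : ℕ) - 1) (by omega) (by omega)) hzle)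
      have heq : (⟨(j : ℕ) - (n + 1) + 1, hlt⟩ : Fin m) = ⟨(j : ℕ) - n, by omega⟩ :=
        Fin.ext (by simpa using hi1)
      rw [heq] at step
      exact le_trans step (ih (by omega))
  have down : ∀ k : ℕ, (h : (j : ℕ) + k < m) → f ⟨(j : ℕ) + k, h⟩ ≤ f j := by
    intro k
    induction k with
    | zero =>
      intro h
      exact le_of_eq (congrArg f (Fin.ext (by simp)))
    | succ n ih =>
      intro h
      have hjne : (j : ℕ) ≠ m - 1 := by omega
      have hzle : z ≤ zb (j : ℕ) := hR.resolve_left hjne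
      have step := keydown ((j : ℕ) + n) (by omega)
        (le_trans hzle (zmono (j : ℕ) ((j : ℕ) + n) (by omega) (by omega)))
      have heq : (⟨(j : ℕ) + (n + 1), h⟩ : Fin m) = ⟨(j : ℕ) + n + 1, by omega⟩ :=
        Fin.ext rfl
      rw [heq]
      exact le_trans step (ih (by omega))
  have hmax : ∀ i : Fin m, f i ≤ f j := by
    intro i
    rcases le_or_gt (i : ℕ) (j : ℕ) with h | h
    · have := up ((j : ℕ) - (i : ℕ)) (by omega)
      have heq : (⟨(j : ℕ) - ((j : ℕ) - (i : ℕ)), by omega⟩ : Fin m) = i :=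
        Fin.ext (by simp; omega)
      rwa [heq] at this
    · have := down ((i : ℕ) - (j : ℕ)) (by omega)
      have heq : (⟨(j : ℕ) + ((i : ℕ) - (j : ℕ)), by omega⟩ : Fin m) = i :=
        Fin.ext (by simp; omega)
      rwa [heq] at this
  refine le_antisymm (Finset.sup'_le _ _ fun i _ => hmax i) ?_
  exact Finset.le_sup' f (Finset.mem_univ j)
end
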